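/- Let n, α, q be positive integers with q even and n ≥ α + q + 3. Then the number of integers m with F_n ≤ m < F_{n+1} whose Zeckendorf digits at positions α+1, …, α+q contain no two consecutive zeros (i.e., there is no k with α+2 ≤ k ≤ α+q and a_{k−1}(m) = a_k(m) = 0) equals F_{n−α−q−1} · F_α + F_{n−α−q−2} · F_{α+1}. Specifically, exactly F_{n−α−q−1} · F_α such m have (a_{α+1}(m), …, a_{α+q}(m)) = (1,0,1,0,…,1,0), and exactly F_{n−α−q−2} · F_{α+1} such m have (a_{α+1}(m), …, a_{α+q}(m)) = (0,1,0,1,…,0,1). -/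

import Mathlib

open Filter MeasureTheory

/-- Fibonacci numbers normalized so that `F 1 = 1`, `F 2 = 2`. -/
def F (n : ℕ) : ℕ := Nat.fib (n + 1)

/-- `a` is the (unique) system of Zeckendorf digits: `a m j` is the `j`-th digit of `m`,
digits are `0` or `1`, indexed from `1`, no two consecutive digits are `1`,
digits vanish above `m`, and the digits decompose `m`. -/
def IsZeckendorf (a : ℕ → ℕ → ℕ) : Prop :=
  ∀ m : ℕ,
    a m 0 = 0 ∧
    (∀ j, a m j ≤ 1) ∧
    (∀ j, ¬(a m j = 1 ∧ a m (j + 1) = 1)) ∧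
    (∀ j, m < j → a m j = 0) ∧
    m = ∑ j ∈ Finset.Icc 1 m, a m j * F j

/-- Number of summands in the Zeckendorf decomposition of `m`. -/
def s (a : ℕ → ℕ → ℕ) (m : ℕ) : ℕ := ∑ j ∈ Finset.Icc 1 m, a m j

/-!
Fix a word `p` on the positions `L, …, S` that begins and ends with `0`. The Zeckendorf word of an
`m ∈ [F n, F (n + 1))` that carries `p` on these positions splits into three independent pieces:
an arbitrary word below `L` (the digits of some `u < F L`), the block `p`, and a word above `S`
whose leading digit sits at `n` (the digits of some `v ∈ [F (n - S), F (n - S + 1))`, shifted by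
`S`). Splicing the pieces is a bijection, so there are `F L * F (n - S - 1)` such `m`.

Digits in positions `α + 1, …, α + q` with neither two consecutive zeros nor (Zeckendorf) two
consecutive ones alternate, so they read `1010…10` or `0101…01`. As `q` is even, the first block
extends by a `0` at position `α` and the second by a `0` at position `α + q + 1`, which gives two
blocks of the above kind.
-/

lemma F_add_two (n : ℕ) : F (n + 2) = F (n + 1) + F n :=
  (Nat.fib_add_two (n := n + 1)).trans (Nat.add_comm _ _)

lemma F_mono : Monotone F := fun _ _ h => Nat.fib_mono (Nat.succ_le_succ h)

lemma F_succ_sub_F {N : ℕ} (hN : 1 ≤ N) : F (N + 1) - F N = F (N - 1) := by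
  obtain ⟨K, rfl⟩ := Nat.exists_eq_add_of_le' hN
  rw [F_add_two]
  simp

def zeckValue (f : ℕ → ℕ) (N : ℕ) : ℕ := ∑ j ∈ Finset.Icc 1 N, f j * F j

lemma zeckValue_zero (f : ℕ → ℕ) : zeckValue f 0 = 0 := rfl

lemma zeckValue_succ (f : ℕ → ℕ) (N : ℕ) :
    zeckValue f (N + 1) = zeckValue f N + f (N + 1) * F (N + 1) :=
  Finset.sum_Icc_succ_top (Nat.le_add_left 1 N) _

lemma zeckValue_congr {f g : ℕ → ℕ} {N : ℕ} (h : ∀ j, 1 ≤ j → j ≤ N → f j = g j) :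
    zeckValue f N = zeckValue g N :=
  Finset.sum_congr rfl fun j hj => by
    rw [Finset.mem_Icc] at hj
    rw [h j hj.1 hj.2]

lemma zeckValue_eq_of_le {f : ℕ → ℕ} {N M : ℕ} (hNM : N ≤ M)
    (h : ∀ j, N < j → j ≤ M → f j = 0) : zeckValue f M = zeckValue f N :=
  (Finset.sum_subset (Finset.Icc_subset_Icc_right hNM) fun j hjM hjN => by
    simp only [Finset.mem_Icc, not_and, not_le] at hjM hjN
    rw [h j (hjN hjM.1) hjM.2, zero_mul]).symm

lemma F_le_zeckValue {f : ℕ → ℕ} {j N : ℕ} (hj : 1 ≤ j) (hjN : j ≤ N) (h : f j = 1) :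
    F j ≤ zeckValue f N := by
  simpa [zeckValue, h] using Finset.single_le_sum (f := fun j => f j * F j)
    (fun _ _ => Nat.zero_le _) (Finset.mem_Icc.2 ⟨hj, hjN⟩)

structure Admissible (f : ℕ → ℕ) : Prop where
  le_one : ∀ j, f j ≤ 1
  not_one_one : ∀ j, ¬(f j = 1 ∧ f (j + 1) = 1)

namespace Admissible

variable {f g : ℕ → ℕ}

lemma eq_zero_or_eq_one (hf : Admissible f) (j : ℕ) : f j = 0 ∨ f j = 1 := by
  have := hf.le_one j
  omega

lemma eq_zero_of_succ (hf : Admissible f) {j : ℕ} (h : f (j + 1) = 1) : f j = 0 := by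
  have := hf.not_one_one j
  have := hf.le_one j
  omega

lemma succ_eq_zero (hf : Admissible f) {j : ℕ} (h : f j = 1) : f (j + 1) = 0 := by
  have := hf.not_one_one j
  have := hf.le_one (j + 1)
  omega

lemma comp_add (hf : Admissible f) (S : ℕ) : Admissible (fun k => f (k + S)) where
  le_one k := hf.le_one (k + S)
  not_one_one k := by simpa only [Nat.add_right_comm k 1 S] using hf.not_one_one (k + S)

lemma comp_sub (hf : Admissible f) (hf₀ : f 0 = 0) (S : ℕ) :
    Admissible (fun k => f (k - S)) where
  le_one k := hf.le_one (k - S)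
  not_one_one k := by
    by_cases hk : S ≤ k
    · simpa only [Nat.sub_add_comm hk] using hf.not_one_one (k - S)
    · simp [Nat.sub_eq_zero_of_le (Nat.le_of_not_le hk), hf₀]

lemma ite_lt (hf : Admissible f) (hg : Admissible g) {K : ℕ} (hK : g K = 0) :
    Admissible (fun k => if k < K then f k else g k) where
  le_one k := by split_ifs <;> simp only [hf.le_one, hg.le_one]
  not_one_one k := by
    by_cases hk : k + 1 < K
    · simpa only [if_pos hk, if_pos (Nat.lt_of_succ_lt hk)] using hf.not_one_one k
    · by_cases hk' : k + 1 = K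
      · simp [hk', hK]
      · simpa only [if_neg hk, if_neg (show ¬k < K by omega)] using hg.not_one_one k

lemma ite_le (hf : Admissible f) (hg : Admissible g) {K : ℕ} (hK : f K = 0) :
    Admissible (fun k => if k ≤ K then f k else g k) where
  le_one k := by split_ifs <;> simp only [hf.le_one, hg.le_one]
  not_one_one k := by
    by_cases hk : k + 1 ≤ K
    · simpa only [if_pos hk, if_pos (Nat.le_of_succ_le hk)] using hf.not_one_one k
    · by_cases hk' : k = K
      · simp [hk', hK]
      · simpa only [if_neg hk, if_neg (show ¬k ≤ K by omega)] using hg.not_one_one k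

lemma zero : Admissible (fun _ => 0) where
  le_one _ := zero_le_one
  not_one_one _ := by simp

theorem zeckValue_lt (hf : Admissible f) : ∀ N, zeckValue f N < F (N + 1)
  | 0 => Nat.fib_pos.2 Nat.two_pos
  | 1 => by
    have e : zeckValue f 1 = f 1 * F 1 := by simp [zeckValue_succ, zeckValue_zero]
    have hF₁ : F 1 = 1 := rfl
    have hF₂ : F (1 + 1) = 2 := rfl
    have := hf.le_one 1
    rw [e, hF₁, hF₂]
    omega
  | N + 2 => by
    have e : zeckValue f (N + 2) = zeckValue f (N + 1) + f (N + 2) * F (N + 2) :=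
      zeckValue_succ f (N + 1)
    have hF : F (N + 2 + 1) = F (N + 2) + F (N + 1) := F_add_two (N + 1)
    rw [e, hF]
    rcases hf.eq_zero_or_eq_one (N + 2) with h | h
    · have : zeckValue f (N + 1) < F (N + 2) := hf.zeckValue_lt (N + 1)
      rw [h, zero_mul]
      omega
    · have := hf.zeckValue_lt N
      rw [zeckValue_succ, hf.eq_zero_of_succ h, h]
      omega

lemma zeckValue_lt_of_eq_zero (hf : Admissible f) {N : ℕ} (h : f N = 0) :
    zeckValue f N < F N := by
  cases N with
  | zero => exact Nat.fib_pos.2 Nat.one_pos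
  | succ K => simpa [zeckValue_succ, h] using hf.zeckValue_lt K

theorem eq_of_zeckValue_eq (hf : Admissible f) (hg : Admissible g) :
    ∀ {N}, zeckValue f N = zeckValue g N → ∀ j, 1 ≤ j → j ≤ N → f j = g j
  | 0, _, _, hj, hjN => absurd hjN (by omega)
  | N + 1, h, j, hj, hjN => by
    rw [zeckValue_succ, zeckValue_succ] at h
    have hf' := hf.zeckValue_lt N
    have hg' := hg.zeckValue_lt N
    -- a top digit `0` caps the value below `F (N + 1)`, a top digit `1` does not
    have htop : f (N + 1) = g (N + 1) := by
      rcases hf.eq_zero_or_eq_one (N + 1) with h₁ | h₁ <;>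
        rcases hg.eq_zero_or_eq_one (N + 1) with h₂ | h₂ <;>
        simp only [h₁, h₂, zero_mul, one_mul, add_zero] at h ⊢ <;> omega
    rcases Nat.lt_or_eq_of_le hjN with hjN | rfl
    · exact eq_of_zeckValue_eq hf hg (N := N) (by rw [htop] at h; omega) j hj (by omega)
    · exact htop

end Admissible

def splice (L S : ℕ) (f p g : ℕ → ℕ) (k : ℕ) : ℕ :=
  if k < L then f k else if k ≤ S then p k else g (k - S)

lemma Admissible.splice {L S : ℕ} {f p g : ℕ → ℕ} (hf : Admissible f) (hp : Admissible p)
    (hg : Admissible g) (hg₀ : g 0 = 0) (hLS : L ≤ S) (hpL : p L = 0) (hpS : p S = 0) :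
    Admissible (splice L S f p g) :=
  hf.ite_lt (hp.ite_le (hg.comp_sub hg₀ S) hpS) (by simp [hLS, hpL])

def alternating (lo hi j : ℕ) : ℕ := if lo ≤ j ∧ j ≤ hi ∧ Even (j - lo) then 1 else 0

lemma alternating_eq_one_iff {lo hi j : ℕ} :
    alternating lo hi j = 1 ↔ lo ≤ j ∧ j ≤ hi ∧ Even (j - lo) := by
  unfold alternating
  split_ifs with h <;> simp [h]

lemma alternating_eq_zero {lo hi j : ℕ} (h : j < lo ∨ hi < j) : alternating lo hi j = 0 :=
  if_neg (by omega)

lemma admissible_alternating (lo hi : ℕ) : Admissible (alternating lo hi) where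
  le_one j := by unfold alternating; split_ifs <;> simp
  not_one_one j := by
    simp only [alternating_eq_one_iff, Nat.even_iff]
    omega

namespace Admissible

variable {f : ℕ → ℕ} {α q : ℕ}

lemma eq_iff (hf : Admissible f) {j x : ℕ} (hx : x ≤ 1) : f j = x ↔ (f j = 1 ↔ x = 1) := by
  have := hf.le_one j
  omega

lemma odd_block_iff (hf : Admissible f) (hq : 0 < q) :
    (∀ j, α + 1 ≤ j → j ≤ α + q → (f j = 1 ↔ Odd (j - α))) ↔
      ∀ j, α ≤ j → j ≤ α + q → f j = alternating (α + 1) (α + q) j := by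
  have key : ∀ j, α + 1 ≤ j → j ≤ α + q → (Odd (j - α) ↔ alternating (α + 1) (α + q) j = 1) :=
    fun j hj₁ hj₂ => by rw [alternating_eq_one_iff, Nat.odd_iff, Nat.even_iff]; omega
  constructor
  · intro h j hj₁ hj₂
    rcases hj₁.eq_or_lt with rfl | hj₁
    · rw [alternating_eq_zero (by omega)]
      exact hf.eq_zero_of_succ ((h (α + 1) le_rfl (by omega)).2 (by simp))
    · rw [hf.eq_iff ((admissible_alternating _ _).le_one j)]
      exact (h j hj₁ hj₂).trans (key j hj₁ hj₂)
  · intro h j hj₁ hj₂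
    rw [h j (by omega) hj₂, key j hj₁ hj₂]

lemma even_block_iff (hf : Admissible f) (hq : 0 < q) (hqe : Even q) :
    (∀ j, α + 1 ≤ j → j ≤ α + q → (f j = 1 ↔ Even (j - α))) ↔
      ∀ j, α + 1 ≤ j → j ≤ α + q + 1 → f j = alternating (α + 2) (α + q) j := by
  have key : ∀ j, α + 1 ≤ j → j ≤ α + q → (Even (j - α) ↔ alternating (α + 2) (α + q) j = 1) :=
    fun j hj₁ hj₂ => by rw [alternating_eq_one_iff, Nat.even_iff, Nat.even_iff]; omega
  constructor
  · intro h j hj₁ hj₂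
    rcases hj₂.eq_or_lt with rfl | hj₂
    · rw [alternating_eq_zero (by omega)]
      exact hf.succ_eq_zero ((h (α + q) (by omega) le_rfl).2 (by simpa using hqe))
    · rw [hf.eq_iff ((admissible_alternating _ _).le_one j)]
      exact (h j hj₁ (by omega)).trans (key j hj₁ (by omega))
  · intro h j hj₁ hj₂
    rw [h j hj₁ (by omega), key j hj₁ hj₂]

lemma no_two_zeros_iff (hf : Admissible f) :
    (¬∃ k, α + 2 ≤ k ∧ k ≤ α + q ∧ f (k - 1) = 0 ∧ f k = 0) ↔
      (∀ j, α + 1 ≤ j → j ≤ α + q → (f j = 1 ↔ Odd (j - α))) ∨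
        (∀ j, α + 1 ≤ j → j ≤ α + q → (f j = 1 ↔ Even (j - α))) := by
  simp only [← Nat.not_odd_iff_even]
  constructor
  · intro h
    have alt : ∀ j, α + 1 ≤ j → j ≤ α + q → (f j = 1 ↔ (f (α + 1) = 1 ↔ Odd (j - α))) := by
      intro j hj₁
      induction j, hj₁ using Nat.le_induction with
      | base => simp
      | succ j hj ih =>
        intro hj₂
        have h₁ := hf.le_one j
        have h₂ := hf.le_one (j + 1)
        have h₃ := hf.not_one_one j
        have h₄ : ¬(f j = 0 ∧ f (j + 1) = 0) := fun h' => h ⟨j + 1, by omega, hj₂, h'⟩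
        have := ih (by omega)
        rw [Nat.odd_iff] at this ⊢
        omega
    rcases hf.eq_zero_or_eq_one (α + 1) with h₀ | h₁
    · exact Or.inr fun j hj₁ hj₂ => by simpa [h₀] using alt j hj₁ hj₂
    · exact Or.inl fun j hj₁ hj₂ => by simpa [h₁] using alt j hj₁ hj₂
  · rintro (h | h) ⟨k, hk₁, hk₂, h₁, h₂⟩
    all_goals
      have e₁ := h (k - 1) (by omega) (by omega)
      have e₂ := h k (by omega) hk₂
      simp only [h₁, h₂, Nat.odd_iff] at e₁ e₂
      omega

end Admissible

namespace IsZeckendorf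

variable {a : ℕ → ℕ → ℕ}

lemma admissible (ha : IsZeckendorf a) (m : ℕ) : Admissible (a m) :=
  ⟨(ha m).2.1, (ha m).2.2.1⟩

lemma F_le_of_eq_one (ha : IsZeckendorf a) {m j : ℕ} (h : a m j = 1) : F j ≤ m := by
  obtain ⟨h0, -, -, hsupp, hsum⟩ := ha m
  have hj : 1 ≤ j := Nat.one_le_iff_ne_zero.2 fun hj => by simp [hj, h0] at h
  have hjm : j ≤ m := not_lt.1 fun hjm => by simp [hsupp j hjm] at h
  exact hsum ▸ F_le_zeckValue hj hjm h

lemma eq_zero_of_lt_F (ha : IsZeckendorf a) {m N j : ℕ} (hm : m < F N) (hj : N ≤ j) :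
    a m j = 0 :=
  ((ha.admissible m).eq_zero_or_eq_one j).resolve_right fun h =>
    absurd (ha.F_le_of_eq_one h) (not_le.2 (hm.trans_le (F_mono hj)))

lemma zeckValue_eq (ha : IsZeckendorf a) {m N : ℕ} (hm : m < F (N + 1)) :
    zeckValue (a m) N = m := by
  obtain ⟨-, -, -, hsupp, hsum⟩ := ha m
  rcases le_total N m with hNm | hmN
  · rw [← zeckValue_eq_of_le hNm fun j hj _ => ha.eq_zero_of_lt_F hm hj]
    exact hsum.symm
  · rw [zeckValue_eq_of_le hmN fun j hj _ => hsupp j hj]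
    exact hsum.symm

lemma eq_one_of_F_le (ha : IsZeckendorf a) {m N : ℕ} (h₁ : F N ≤ m) (h₂ : m < F (N + 1)) :
    a m N = 1 :=
  ((ha.admissible m).eq_zero_or_eq_one N).resolve_left fun h => by
    have := (ha.admissible m).zeckValue_lt_of_eq_zero h
    rw [ha.zeckValue_eq h₂] at this
    omega

theorem digits_zeckValue (ha : IsZeckendorf a) {f : ℕ → ℕ} {N : ℕ} (hf : Admissible f)
    (hf₀ : f 0 = 0) (hfN : ∀ j, N < j → f j = 0) : a (zeckValue f N) = f := by
  have hlt := hf.zeckValue_lt N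
  funext j
  rcases Nat.eq_zero_or_pos j with rfl | hj
  · rw [(ha _).1, hf₀]
  rcases le_or_gt j N with hjN | hjN
  · exact (ha.admissible _).eq_of_zeckValue_eq hf (ha.zeckValue_eq hlt) j hj hjN
  · rw [ha.eq_zero_of_lt_F hlt hjN, hfN j hjN]

lemma digits_zeckValue_low (ha : IsZeckendorf a) {m L : ℕ} (hL : a m L = 0) :
    a (zeckValue (a m) L) = fun k => if k < L then a m k else 0 := by
  have hval : zeckValue (a m) L = zeckValue (fun k => if k < L then a m k else 0) L :=
    zeckValue_congr fun k _ hk => by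
      rcases Nat.lt_or_eq_of_le hk with hk | rfl
      · rw [if_pos hk]
      · rw [if_neg (lt_irrefl k), hL]
  rw [hval]
  refine ha.digits_zeckValue ((ha.admissible m).ite_lt Admissible.zero rfl) ?_ ?_
  · split_ifs
    · exact (ha m).1
    · rfl
  · intro j hj
    rw [if_neg (by omega)]

lemma digits_zeckValue_high (ha : IsZeckendorf a) {m n S : ℕ} (hm : m < F (n + 1))
    (hS : a m S = 0) :
    a (zeckValue (fun k => a m (k + S)) (n - S)) = fun k => a m (k + S) :=
  ha.digits_zeckValue ((ha.admissible m).comp_add S) (by simpa using hS)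
    fun j hj => ha.eq_zero_of_lt_F hm (by omega)

variable {L S n : ℕ} {p : ℕ → ℕ}

lemma digits_zeckValue_splice (ha : IsZeckendorf a) (hp : Admissible p) (hLS : L ≤ S)
    (hpL : p L = 0) (hpS : p S = 0) (hSn : S ≤ n) {u v : ℕ} (hv : v < F (n - S + 1)) :
    a (zeckValue (splice L S (a u) p (a v)) n) = splice L S (a u) p (a v) := by
  refine ha.digits_zeckValue
    ((ha.admissible u).splice hp (ha.admissible v) (ha v).1 hLS hpL hpS) ?_ fun k hk => ?_
  · rcases Nat.eq_zero_or_pos L with rfl | hL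
    · simpa [splice] using hpL
    · simpa [splice, hL] using (ha u).1
  · simp only [splice, if_neg (show ¬k < L by omega), if_neg (show ¬k ≤ S by omega)]
    exact ha.eq_zero_of_lt_F hv (by omega)

lemma zeckValue_splice_mem (ha : IsZeckendorf a) (hp : Admissible p) (hLS : L ≤ S)
    (hpL : p L = 0) (hpS : p S = 0) (hSn : S < n) {u v : ℕ} (hv₁ : F (n - S) ≤ v)
    (hv₂ : v < F (n - S + 1)) :
    (F n ≤ zeckValue (splice L S (a u) p (a v)) n ∧
        zeckValue (splice L S (a u) p (a v)) n < F (n + 1)) ∧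
      ∀ j, L ≤ j → j ≤ S → a (zeckValue (splice L S (a u) p (a v)) n) j = p j := by
  have htop : splice L S (a u) p (a v) n = 1 := by
    simp only [splice, if_neg (show ¬n < L by omega), if_neg (show ¬n ≤ S by omega)]
    exact ha.eq_one_of_F_le hv₁ hv₂
  rw [ha.digits_zeckValue_splice hp hLS hpL hpS hSn.le hv₂]
  exact ⟨⟨F_le_zeckValue (by omega) le_rfl htop,
    ((ha.admissible u).splice hp (ha.admissible v) (ha v).1 hLS hpL hpS).zeckValue_lt n⟩,
    fun j hj₁ hj₂ => by simp [splice, hj₂, not_lt.2 hj₁]⟩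

lemma zeckValue_splice_low_high (ha : IsZeckendorf a) {m : ℕ} (hm : m < F (n + 1))
    (hpat : ∀ j, L ≤ j → j ≤ S → a m j = p j) (hLS : L ≤ S) (hpL : p L = 0) (hpS : p S = 0) :
    zeckValue (splice L S (a (zeckValue (a m) L)) p
      (a (zeckValue (fun k => a m (k + S)) (n - S)))) n = m := by
  rw [ha.digits_zeckValue_low ((hpat L le_rfl hLS).trans hpL),
    ha.digits_zeckValue_high hm ((hpat S hLS le_rfl).trans hpS)]
  conv_rhs => rw [← ha.zeckValue_eq hm]
  refine zeckValue_congr fun k _ _ => ?_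
  simp only [splice]
  split_ifs with h₁ h₂
  · rfl
  · exact (hpat k (not_lt.1 h₁) h₂).symm
  · rw [Nat.sub_add_cancel (by omega)]

lemma zeckValue_splice_low (ha : IsZeckendorf a) (hLS : L ≤ S) (hpL : p L = 0) {u : ℕ}
    (hu : u < F L) (g : ℕ → ℕ) : zeckValue (splice L S (a u) p g) L = u := by
  conv_rhs => rw [← ha.zeckValue_eq (hu.trans_le (F_mono (Nat.le_succ L)))]
  refine zeckValue_congr fun k _ hk => ?_
  rcases Nat.lt_or_eq_of_le hk with hk | rfl
  · simp [splice, hk]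
  · simp [splice, hLS, hpL, ha.eq_zero_of_lt_F hu le_rfl]

lemma zeckValue_splice_high (ha : IsZeckendorf a) (hLS : L ≤ S) {v N : ℕ} (hv : v < F (N + 1))
    (f : ℕ → ℕ) : zeckValue (fun k => splice L S f p (a v) (k + S)) N = v := by
  conv_rhs => rw [← ha.zeckValue_eq hv]
  refine zeckValue_congr fun k hk _ => ?_
  simp [splice, show ¬k + S < L by omega, show ¬k + S ≤ S by omega]

theorem card_filter_block_eq (ha : IsZeckendorf a) (hp : Admissible p) (hLS : L ≤ S)
    (hpL : p L = 0) (hpS : p S = 0) (hSn : S < n) :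
    ((Finset.Ico (F n) (F (n + 1))).filter fun m => ∀ j, L ≤ j → j ≤ S → a m j = p j).card =
      F L * F (n - S - 1) := by
  set N := n - S
  have hN₁ : 1 ≤ N := by omega
  rw [show F L * F (n - S - 1) = (Finset.range (F L) ×ˢ Finset.Ico (F N) (F (N + 1))).card by
    rw [Finset.card_product, Finset.card_range, Nat.card_Ico, F_succ_sub_F hN₁]]
  refine Finset.card_nbij' (fun m => (zeckValue (a m) L, zeckValue (fun k => a m (k + S)) N))
    (fun x => zeckValue (splice L S (a x.1) p (a x.2)) n) ?_ ?_ ?_ ?_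
  · intro m hm
    simp only [Finset.mem_coe, Finset.mem_filter, Finset.mem_product, Finset.mem_range,
      Finset.mem_Ico] at hm ⊢
    obtain ⟨⟨hm₁, hm₂⟩, hpat⟩ := hm
    have htop : a m (N + S) = 1 := by
      rw [show N + S = n by omega]
      exact ha.eq_one_of_F_le hm₁ hm₂
    exact ⟨(ha.admissible m).zeckValue_lt_of_eq_zero ((hpat L le_rfl hLS).trans hpL),
      F_le_zeckValue (f := fun k => a m (k + S)) hN₁ le_rfl htop,
      ((ha.admissible m).comp_add S).zeckValue_lt N⟩
  · rintro ⟨u, v⟩ huv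
    simp only [Finset.mem_coe, Finset.mem_filter, Finset.mem_product, Finset.mem_range,
      Finset.mem_Ico] at huv ⊢
    exact ha.zeckValue_splice_mem hp hLS hpL hpS hSn huv.2.1 huv.2.2
  · intro m hm
    simp only [Finset.mem_coe, Finset.mem_filter, Finset.mem_Ico] at hm
    exact ha.zeckValue_splice_low_high hm.1.2 hm.2 hLS hpL hpS
  · rintro ⟨u, v⟩ huv
    simp only [Finset.mem_coe, Finset.mem_product, Finset.mem_range, Finset.mem_Ico] at huv
    dsimp only
    rw [ha.digits_zeckValue_splice hp hLS hpL hpS hSn.le huv.2.2]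
    exact Prod.ext (ha.zeckValue_splice_low hLS hpL huv.1 _)
      (ha.zeckValue_splice_high hLS huv.2.2 _)

end IsZeckendorf

lemma Nat.card_subtype_Ico_eq_card_filter (x y : ℕ) (P : ℕ → Prop) [DecidablePred P] :
    Nat.card {m : ℕ // x ≤ m ∧ m < y ∧ P m} = ((Finset.Ico x y).filter P).card := by
  rw [← Nat.card_eq_finsetCard]
  exact Nat.card_congr (Equiv.subtypeEquivRight fun m => by simp [and_assoc])

theorem count_bad_middle_blocks_general
    (a : ℕ → ℕ → ℕ) (ha : IsZeckendorf a)
    (n α q : ℕ) (hq : 0 < q) (hqe : Even q)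
    (hbound : α + q + 3 ≤ n) :
    Nat.card {m : ℕ // F n ≤ m ∧ m < F (n + 1) ∧
        ¬∃ k, α + 2 ≤ k ∧ k ≤ α + q ∧ a m (k - 1) = 0 ∧ a m k = 0} =
      F (n - α - q - 1) * F α + F (n - α - q - 2) * F (α + 1) ∧
    Nat.card {m : ℕ // F n ≤ m ∧ m < F (n + 1) ∧
        ∀ j, α + 1 ≤ j → j ≤ α + q → (a m j = 1 ↔ Odd (j - α))} =
      F (n - α - q - 1) * F α ∧
    Nat.card {m : ℕ // F n ≤ m ∧ m < F (n + 1) ∧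
        ∀ j, α + 1 ≤ j → j ≤ α + q → (a m j = 1 ↔ Even (j - α))} =
      F (n - α - q - 2) * F (α + 1) := by
  classical
  simp only [Nat.card_subtype_Ico_eq_card_filter]
  set W := Finset.Ico (F n) (F (n + 1))
  have hpS : alternating (α + 1) (α + q) (α + q) = 0 :=
    if_neg fun h => by rw [Nat.even_iff] at h hqe; omega
  have hodd : (W.filter fun m => ∀ j, α + 1 ≤ j → j ≤ α + q → (a m j = 1 ↔ Odd (j - α))).card =
      F (n - α - q - 1) * F α := by
    rw [Finset.filter_congr fun m _ => (ha.admissible m).odd_block_iff hq,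
      ha.card_filter_block_eq (admissible_alternating _ _) (by omega)
        (alternating_eq_zero (by omega)) hpS (by omega), mul_comm, Nat.sub_add_eq]
  have heven : (W.filter fun m => ∀ j, α + 1 ≤ j → j ≤ α + q → (a m j = 1 ↔ Even (j - α))).card =
      F (n - α - q - 2) * F (α + 1) := by
    rw [Finset.filter_congr fun m _ => (ha.admissible m).even_block_iff hq hqe,
      ha.card_filter_block_eq (admissible_alternating _ _) (by omega)
        (alternating_eq_zero (by omega)) (alternating_eq_zero (by omega)) (by omega),
      mul_comm, show n - (α + q + 1) - 1 = n - α - q - 2 by omega]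
  refine ⟨?_, hodd, heven⟩
  rw [Finset.filter_congr fun m _ => (ha.admissible m).no_two_zeros_iff, Finset.filter_or,
    Finset.card_union_of_disjoint, hodd, heven]
  exact Finset.disjoint_filter.2 fun m _ h₁ h₂ => by
    simpa using (h₁ (α + 1) le_rfl (by omega)).symm.trans (h₂ (α + 1) le_rfl (by omega))

/-- counting the `m ∈ [F n, F (n+1))` whose digits in positions
`α+1, …, α+q` have no two consecutive zeros. -/
theorem count_bad_middle_blocks
    (a : ℕ → ℕ → ℕ) (ha : IsZeckendorf a)
    (n α q : ℕ) (hn : 0 < n) (hα : 0 < α) (hq : 0 < q) (hqe : Even q)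
    (hbound : α + q + 3 ≤ n) :
    Nat.card {m : ℕ // F n ≤ m ∧ m < F (n + 1) ∧
        ¬∃ k, α + 2 ≤ k ∧ k ≤ α + q ∧ a m (k - 1) = 0 ∧ a m k = 0} =
      F (n - α - q - 1) * F α + F (n - α - q - 2) * F (α + 1) ∧
    Nat.card {m : ℕ // F n ≤ m ∧ m < F (n + 1) ∧
        ∀ j, α + 1 ≤ j → j ≤ α + q → (a m j = 1 ↔ Odd (j - α))} =
      F (n - α - q - 1) * F α ∧
    Nat.card {m : ℕ // F n ≤ m ∧ m < F (n + 1) ∧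
        ∀ j, α + 1 ≤ j → j ≤ α + q → (a m j = 1 ↔ Even (j - α))} =
      F (n - α - q - 2) * F (α + 1) :=
  count_bad_middle_blocks_general a ha n α q hq hqe hbound
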